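/- Let (n_i)_{i≥1} be a sequence of integers with n_i ≥ 2 for all i, and let W = (W_1, W_2, W_3, …) be its J-word. If the averages (n_1 + ⋯ + n_k)/k tend to infinity as k → ∞, then the partial quotient averages of the J-word tend to 1; that is, lim_{N→∞} (W_1 + W_2 + ⋯ + W_N)/N = 1. -/

import Mathlib

/-!
Every letter of the J-word is `1`, except for a `2` at the end of each block, so
`W_1 + ⋯ + W_N = N + #{block ends ≤ N}`. The `k`-th block ends at
`p_k = n_1 + ⋯ + n_k - (k - 1)`, and `p_k / k → ∞` because the averages of the `n_i` do.
Hence only `o(N)` blocks end before `N`, and the averages of `W` tend to `1`.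
-/

/-- Given a sequence `n` (indexed from 1) of integers with `n i ≥ 2` for all `i ≥ 1`,
`W` (indexed from 1) is its J-word: the concatenation of blocks `B_1 B_2 B_3 ⋯`, where
`B_1` consists of `n 1 - 1` copies of `1` followed by a single `2` and, for `i ≥ 2`,
`B_i` consists of `n i - 2` copies of `1` followed by a single `2`.  Equivalently,
`W j = 2` exactly when `j` is the position of the end of some block, i.e. when
`j = (n 1 + ⋯ + n k) - (k - 1)` for some `k ≥ 1`, and `W j = 1` otherwise. -/
def IsJWord (n : ℕ → ℤ) (W : ℕ → ℕ) : Prop :=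
  ∀ j : ℕ, 1 ≤ j →
    ((∃ k : ℕ, 1 ≤ k ∧ (j : ℤ) = (∑ i ∈ Finset.Icc 1 k, n i) - ((k : ℤ) - 1)) → W j = 2) ∧
    ((¬ ∃ k : ℕ, 1 ≤ k ∧ (j : ℤ) = (∑ i ∈ Finset.Icc 1 k, n i) - ((k : ℤ) - 1)) → W j = 1)

open Filter Finset Topology

section Density

variable {f : ℕ → ℝ}

theorem card_filter_le_le_of_mul_le {c : ℝ} (hc : 0 < c) {K : ℕ} (hK : ∀ k ≥ K, c * k ≤ f k)
    (N : ℕ) : (#{k ∈ range N | f k ≤ N} : ℝ) ≤ K + N / c + 1 := by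
  have hsub : {k ∈ range N | f k ≤ N} ⊆ range (K + ⌊(N : ℝ) / c⌋₊ + 1) := by
    intro k hk
    rw [mem_filter] at hk
    rw [mem_range]
    rcases lt_or_ge k K with hkK | hkK
    · omega
    · have : (k : ℝ) ≤ N / c := by
        rw [le_div_iff₀ hc, mul_comm]
        exact (hK k hkK).trans hk.2
      have := Nat.le_floor this
      omega
  calc (#{k ∈ range N | f k ≤ N} : ℝ)
      ≤ (K + ⌊(N : ℝ) / c⌋₊ + 1 : ℕ) := by
        exact_mod_cast (card_le_card hsub).trans (card_range _).le
    _ ≤ K + N / c + 1 := by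
        push_cast
        gcongr
        exact Nat.floor_le (by positivity)

theorem tendsto_card_filter_le_div_nhds_zero (hf : Tendsto (fun k : ℕ => f k / k) atTop atTop) :
    Tendsto (fun N : ℕ => (#{k ∈ range N | f k ≤ N} : ℝ) / N) atTop (𝓝 0) := by
  rw [tendsto_order]
  refine ⟨fun a ha => Eventually.of_forall fun N => ha.trans_le (by positivity), fun ε hε => ?_⟩
  obtain ⟨K, hK⟩ := eventually_atTop.1
    ((hf.eventually_ge_atTop (2 / ε)).and (eventually_ge_atTop 1))
  have hmul : ∀ k ≥ K, 2 / ε * k ≤ f k := fun k hk => by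
    obtain ⟨hfk, hk1⟩ := hK k hk
    rwa [le_div_iff₀ (by exact_mod_cast hk1)] at hfk
  have hsmall := (tendsto_order.1 (tendsto_const_div_atTop_nhds_zero_nat ((K : ℝ) + 1))).2
    (ε / 2) (half_pos hε)
  filter_upwards [hsmall, eventually_gt_atTop 0] with N hN hN0
  have hN0' : (0 : ℝ) < N := by exact_mod_cast hN0
  calc (#{k ∈ range N | f k ≤ N} : ℝ) / N
      ≤ (K + N / (2 / ε) + 1) / N := by
        gcongr
        exact card_filter_le_le_of_mul_le (by positivity) hmul N
    _ = (K + 1) / N + ε / 2 := by field_simp; ring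
    _ < ε := by linarith

end Density

section JWord

def blockEnd (n : ℕ → ℤ) (k : ℕ) : ℤ :=
  (∑ i ∈ Icc 1 k, n i) - ((k : ℤ) - 1)

def IsBlockEnd (n : ℕ → ℤ) (j : ℕ) : Prop :=
  ∃ k : ℕ, 1 ≤ k ∧ (j : ℤ) = blockEnd n k

open Classical in
theorem IsJWord.sum_Icc_eq {n : ℕ → ℤ} {W : ℕ → ℕ} (hW : IsJWord n W) (N : ℕ) :
    ∑ j ∈ Icc 1 N, (W j : ℝ) = N + #{j ∈ Icc 1 N | IsBlockEnd n j} := by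
  have hWj : ∀ j ∈ Icc 1 N, (W j : ℝ) = 1 + if IsBlockEnd n j then 1 else 0 := by
    intro j hj
    have hWj := hW j (mem_Icc.1 hj).1
    by_cases h : IsBlockEnd n j
    · rw [hWj.1 h, if_pos h]
      norm_num
    · rw [hWj.2 h, if_neg h]
      norm_num
  rw [sum_congr rfl hWj, sum_add_distrib, sum_const, sum_boole, Nat.card_Icc]
  simp

variable {n : ℕ → ℤ}

theorem lt_blockEnd (hn : ∀ i : ℕ, 1 ≤ i → 2 ≤ n i) (k : ℕ) : (k : ℤ) < blockEnd n k := by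
  have : ∑ i ∈ Icc 1 k, (2 : ℤ) ≤ ∑ i ∈ Icc 1 k, n i :=
    sum_le_sum fun i hi => hn i (mem_Icc.1 hi).1
  simp only [sum_const, Nat.card_Icc, add_tsub_cancel_right, nsmul_eq_mul] at this
  unfold blockEnd
  linarith

open Classical in
theorem card_filter_isBlockEnd_le (hn : ∀ i : ℕ, 1 ≤ i → 2 ≤ n i) (N : ℕ) :
    #{j ∈ Icc 1 N | IsBlockEnd n j} ≤ #{k ∈ range N | (blockEnd n k : ℝ) ≤ N} := by
  refine card_le_card_of_surjOn (fun k => (blockEnd n k).toNat) ?_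
  rintro j hj
  simp only [coe_filter, mem_Icc, Set.mem_ofPred_eq] at hj
  obtain ⟨⟨-, hjN⟩, k, -, hjk⟩ := hj
  have hk := lt_blockEnd hn k
  refine ⟨k, ?_, by simp only; omega⟩
  simp only [coe_filter, mem_range, Set.mem_ofPred_eq]
  constructor
  · omega
  · rw [← hjk]
    exact_mod_cast hjN

theorem tendsto_blockEnd_div_atTop
    (havg : Tendsto (fun k : ℕ => (∑ i ∈ Icc 1 k, (n i : ℝ)) / k) atTop atTop) :
    Tendsto (fun k : ℕ => (blockEnd n k : ℝ) / k) atTop atTop := by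
  refine tendsto_atTop_mono' _ ?_ (tendsto_atTop_add_const_right _ (-1) havg)
  filter_upwards [eventually_gt_atTop 0] with k hk
  have hk' : (0 : ℝ) < k := by exact_mod_cast hk
  simp only [blockEnd, Int.cast_sub, Int.cast_sum, Int.cast_natCast, Int.cast_one]
  rw [sub_div, sub_div, div_self hk'.ne']
  linarith [div_pos one_pos hk']

end JWord

/-- If the partial quotient averages `(n_1 + ⋯ + n_k)/k` tend to infinity, then the
partial quotient averages of the J-word of `(n_i)` tend to `1`. -/
theorem jword_averages_tendsto_one (n : ℕ → ℤ) (hn : ∀ i : ℕ, 1 ≤ i → 2 ≤ n i)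
    (W : ℕ → ℕ) (hW : IsJWord n W)
    (havg : Filter.Tendsto (fun k : ℕ => (∑ i ∈ Finset.Icc 1 k, (n i : ℝ)) / k)
      Filter.atTop Filter.atTop) :
    Filter.Tendsto
      (fun N : ℕ => (∑ j ∈ Finset.Icc 1 N, (W j : ℝ)) / N)
      Filter.atTop (nhds 1) := by
  classical
  have hdensity : Tendsto (fun N : ℕ => (#{j ∈ Icc 1 N | IsBlockEnd n j} : ℝ) / N)
      atTop (𝓝 0) :=
    squeeze_zero (fun N => by positivity)
      (fun N => div_le_div_of_nonneg_right (by exact_mod_cast card_filter_isBlockEnd_le hn N)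
        N.cast_nonneg)
      (tendsto_card_filter_le_div_nhds_zero (tendsto_blockEnd_div_atTop havg))
  have hlim := (tendsto_const_nhds (x := (1 : ℝ))).add hdensity
  rw [add_zero] at hlim
  refine hlim.congr' ?_
  filter_upwards [eventually_ne_atTop 0] with N hN
  rw [hW.sum_Icc_eq, add_div, div_self (by exact_mod_cast hN)]
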